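/- Let M ⊆ ℝ^{n×p} be nonempty, R > 0, and for each X ∈ M let T_X ⊆ ℝ^{n×p} be a linear subspace such that for all X, X' ∈ M and every ζ ∈ ℝ^{n×p} orthogonal to T_X (with respect to the Frobenius inner product): 2R⟨ζ, X'−X⟩ ≤ ‖ζ‖·‖X'−X‖². Let h : ℝ^{n×p} → ℝ, τ ∈ ℝ, X ∈ M, and v ∈ ℝ^{n×p} satisfy h(Y) ≥ h(X) + ⟨v, Y−X⟩ − (τ/2)‖Y−X‖² for all Y ∈ M. Then for all Y ∈ M: h(Y) ≥ h(X) + ⟨proj_{T_X}(v), Y−X⟩ − ((τ + ‖v‖/R)/2)·‖Y−X‖², where proj_{T_X} is the orthogonal projection onto T_X; in particular, if ‖v‖ ≤ L then h(Y) ≥ h(X) + ⟨proj_{T_X}(v), Y−X⟩ − ((τ + L/R)/2)·‖Y−X‖² for all Y ∈ M. -/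

import Mathlib

/-!
Common definitions for the formalization of results from
"Nonsmooth Optimization over the Stiefel Manifold via a Randomized
Submanifold Subgradient Method" (RSSM).
-/

open Matrix Finset

noncomputable section

namespace RSSM

variable {n p ℓ : ℕ}

/-- Real `n × p` matrices. -/
abbrev Mat (n p : ℕ) := Matrix (Fin n) (Fin p) ℝ

/-- Frobenius inner product `⟨ξ,η⟩ = tr(ξᵀ η)`. -/
def fip (ξ η : Mat n p) : ℝ := (ξᵀ * η).trace

/-- Frobenius norm. -/
def fnorm (ξ : Mat n p) : ℝ := Real.sqrt (fip ξ ξ)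

/-- The Stiefel manifold `St(n,p)`. -/
def Stiefel (n p : ℕ) : Set (Mat n p) := {X | Xᵀ * X = 1}

/-- Column-selection matrix `I_C`. -/
def sel (C : Finset (Fin p)) : Matrix (Fin p) (Fin C.card) ℝ :=
  Matrix.of fun s t => if s = C.orderEmbOfFin rfl t then (1 : ℝ) else 0

/-- Skew-symmetric part. -/
def skewPart {m : ℕ} (A : Matrix (Fin m) (Fin m) ℝ) : Matrix (Fin m) (Fin m) ℝ :=
  (1 / 2 : ℝ) • (A - Aᵀ)

/-- Symmetric part. -/
def symPart {m : ℕ} (A : Matrix (Fin m) (Fin m) ℝ) : Matrix (Fin m) (Fin m) ℝ :=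
  (1 / 2 : ℝ) • (A + Aᵀ)

open Classical in
/-- Inverse of the positive-semidefinite square root (junk value `0` otherwise). -/
def invSqrt {m : ℕ} (S : Matrix (Fin m) (Fin m) ℝ) : Matrix (Fin m) (Fin m) ℝ :=
  if h : S.PosSemidef then
    (h.1.eigenvectorUnitary * diagonal (Real.sqrt ∘ h.1.eigenvalues) *
      (star h.1.eigenvectorUnitary : Matrix (Fin m) (Fin m) ℝ))⁻¹ else 0

/-- Orthogonal projection onto the tangent space `T_X St(n,p)`. -/
def ptan (X ξ : Mat n p) : Mat n p := ξ - X * symPart (Xᵀ * ξ)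

/-- Orthogonal projection `Π` onto the tangent space of the submanifold block at `X_D`. -/
def pblk (X : Mat n p) (D : Finset (Fin p)) (η : Matrix (Fin n) (Fin D.card) ℝ) :
    Matrix (Fin n) (Fin D.card) ℝ :=
  (X * sel D) * skewPart ((X * sel D)ᵀ * η) + (1 - X * Xᵀ) * η

/-- The averaging operator `A_X` (written as an average over ordered pairs of
distinct indices, which equals the average over unordered pairs since each
unordered pair is counted twice). -/
def avg (C : Fin ℓ → Finset (Fin p)) (X ξ : Mat n p) : Mat n p :=
  ((ℓ : ℝ) * ((ℓ : ℝ) - 1))⁻¹ •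
    ∑ q ∈ Finset.univ.offDiag,
      ((1 : Matrix (Fin n) (Fin n) ℝ)
          - (X * sel ((C q.1 ∪ C q.2)ᶜ)) * (X * sel ((C q.1 ∪ C q.2)ᶜ))ᵀ)
        * (ξ * sel (C q.1 ∪ C q.2)) * (sel (C q.1 ∪ C q.2))ᵀ

/-- The averaging operator `A_X` as a linear endomorphism. -/
def avgL (C : Fin ℓ → Finset (Fin p)) (X : Mat n p) : Mat n p →ₗ[ℝ] Mat n p where
  toFun := avg C X
  map_add' := by
    intro ξ η
    simp [avg, Matrix.add_mul, Matrix.mul_add, Finset.sum_add_distrib, smul_add]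
  map_smul' := by
    intro c ξ
    simp only [avg, RingHom.id_apply, Matrix.smul_mul, Matrix.mul_smul, ← Finset.smul_sum]
    rw [smul_comm]

/-- `C(ℓ,2) = ℓ(ℓ-1)/2`. -/
def choose2 (ℓ : ℕ) : ℝ := (ℓ : ℝ) * ((ℓ : ℝ) - 1) / 2

/-- Block Hadamard product `A ⊡ M` with respect to the partition `C`. -/
def bhad (C : Fin ℓ → Finset (Fin p)) (A : Matrix (Fin ℓ) (Fin ℓ) ℝ)
    (M : Matrix (Fin p) (Fin p) ℝ) : Matrix (Fin p) (Fin p) ℝ :=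
  Matrix.of fun s t => (∑ i, ∑ j, if s ∈ C i ∧ t ∈ C j then A i j else 0) * M s t

/-- `Q' = J - ((ℓ-2)/(ℓ-1)) I`. -/
def Qmat (ℓ : ℕ) : Matrix (Fin ℓ) (Fin ℓ) ℝ :=
  Matrix.of fun i j => 1 - (if i = j then ((ℓ : ℝ) - 2) / ((ℓ : ℝ) - 1) else 0)

/-- The all-ones `ℓ × ℓ` matrix `J`. -/
def Jmat (ℓ : ℕ) : Matrix (Fin ℓ) (Fin ℓ) ℝ := Matrix.of fun _ _ => 1

/-- The operator `B_Z` (the inverse of the averaging operator `A_Z`). -/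
def Bop (C : Fin ℓ → Finset (Fin p)) (Z ξ : Mat n p) : Mat n p :=
  Z * (choose2 ℓ • bhad C (Qmat ℓ) (Zᵀ * ξ)) + ((ℓ : ℝ) / 2) • ((1 - Z * Zᵀ) * ξ)

/-- `‖ξ‖²_{A_Z^{-1}} = ⟨B_Z(ξ), ξ⟩`. -/
def anorm2 (C : Fin ℓ → Finset (Fin p)) (Z ξ : Mat n p) : ℝ := fip (Bop C Z ξ) ξ

/-- The RSSM update `U(X, v, γ, {i,j})`: it agrees with `X` on all columns outside
`C_i ∪ C_j` and performs a retracted partial Riemannian subgradient step there. -/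
def update (C : Fin ℓ → Finset (Fin p)) (X v : Mat n p) (γ : ℝ) (i j : Fin ℓ) : Mat n p :=
  X - (X * sel (C i ∪ C j)) * (sel (C i ∪ C j))ᵀ
    + ((X * sel (C i ∪ C j) - γ • pblk X (C i ∪ C j) (v * sel (C i ∪ C j)))
        * invSqrt ((X * sel (C i ∪ C j) - γ • pblk X (C i ∪ C j) (v * sel (C i ∪ C j)))ᵀ
            * (X * sel (C i ∪ C j) - γ • pblk X (C i ∪ C j) (v * sel (C i ∪ C j)))))
      * (sel (C i ∪ C j))ᵀ

/-- The subdifferential of a `τ`-weakly convex function relative to `Ω`. -/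
def subdiff (Ω : Set (Mat n p)) (τ : ℝ) (f : Mat n p → ℝ) (X : Mat n p) :
    Set (Mat n p) :=
  {v | ∀ Y ∈ Ω, f Y ≥ f X + fip v (Y - X) - τ / 2 * (fnorm (Y - X)) ^ 2}

/-- `C` is a partition of `[p]` into nonempty blocks. -/
def IsPartition (C : Fin ℓ → Finset (Fin p)) : Prop :=
  (∀ i, (C i).Nonempty) ∧ (∀ i j, i ≠ j → Disjoint (C i) (C j)) ∧ (∀ s, ∃ i, s ∈ C i)

/-- The weakly convex Lipschitz setting. -/
structure Setting (n p : ℕ) (f : Mat n p → ℝ) (τ L : ℝ) (Ω : Set (Mat n p)) : Prop where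
  tau_nonneg : 0 ≤ τ
  L_pos : 0 < L
  isOpen : IsOpen Ω
  bounded : ∃ R : ℝ, ∀ Y ∈ Ω, fnorm Y ≤ R
  convex : Convex ℝ Ω
  stiefel_subset : Stiefel n p ⊆ Ω
  lipschitz : ∀ X ∈ Ω, ∀ Y ∈ Ω, |f X - f Y| ≤ L * fnorm (X - Y)
  weaklyConvex : ConvexOn ℝ Ω (fun Z => f Z + τ / 2 * (fnorm Z) ^ 2)

/-- The adaptive proximal objective `Y ↦ f(Y) + (1/(2λ))‖Y-X‖²_{A_X^{-1}}`. -/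
def pobj (C : Fin ℓ → Finset (Fin p)) (f : Mat n p → ℝ) (lam : ℝ) (X Y : Mat n p) : ℝ :=
  f Y + 1 / (2 * lam) * anorm2 C X (Y - X)

/-- The adaptive Moreau envelope `f_λ`. -/
def moreau (C : Fin ℓ → Finset (Fin p)) (f : Mat n p → ℝ) (lam : ℝ) (X : Mat n p) : ℝ :=
  sInf ((fun Y => pobj C f lam X Y) '' Stiefel n p)

open Classical in
/-- The adaptive proximal point `Z_X` (defined via choice; under the standing
hypotheses the minimizer over the Stiefel manifold exists and is unique). -/
def proxPt (C : Fin ℓ → Finset (Fin p)) (f : Mat n p → ℝ) (lam : ℝ) (X : Mat n p) :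
    Mat n p :=
  if h : ∃ Z ∈ Stiefel n p, ∀ Y ∈ Stiefel n p, pobj C f lam X Z ≤ pobj C f lam X Y
  then h.choose else X

/-- The surrogate stationarity measure `Θ_λ(X) = (1/λ)‖Z_X - X‖_{A_X^{-1}}`. -/
def Theta (C : Fin ℓ → Finset (Fin p)) (f : Mat n p → ℝ) (lam : ℝ) (X : Mat n p) : ℝ :=
  1 / lam * Real.sqrt (anorm2 C X (proxPt C f lam X - X))

/-- The type of unordered pairs of distinct indices in `[ℓ]`. -/
def PairT (ℓ : ℕ) := {s : Sym2 (Fin ℓ) // ¬ s.IsDiag}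

instance : Fintype (PairT ℓ) := by unfold PairT; infer_instance
instance : DecidableEq (PairT ℓ) := by unfold PairT; infer_instance
instance : MeasurableSpace (PairT ℓ) := ⊤

/-- The RSSM update as a function of an unordered pair of indices. -/
def updateS (C : Fin ℓ → Finset (Fin p)) (X v : Mat n p) (γ : ℝ) (s : Sym2 (Fin ℓ)) :
    Mat n p :=
  Sym2.lift ⟨fun i j => update C X v γ i j, by
    intro i j
    show update C X v γ i j = update C X v γ j i
    unfold update pblk
    rw [Finset.union_comm (C i) (C j)]⟩ s

/-- The RSSM iterates driven by a sequence `ω` of unordered pairs. -/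
def seqIter (C : Fin ℓ → Finset (Fin p)) (V : Mat n p → Mat n p) (X0 : Mat n p)
    (γ : ℕ → ℝ) (ω : ℕ → PairT ℓ) : ℕ → Mat n p
  | 0 => X0
  | k + 1 => updateS C (seqIter C V X0 γ ω k) (V (seqIter C V X0 γ ω k)) (γ k) (ω k).1

/-- The RSSM iterate after `k` steps driven by a finite prefix of unordered pairs. -/
def preIter (C : Fin ℓ → Finset (Fin p)) (V : Mat n p → Mat n p) (X0 : Mat n p)
    (γ : ℕ → ℝ) : (k : ℕ) → (Fin k → PairT ℓ) → Mat n p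
  | 0, _ => X0
  | k + 1, g =>
      updateS C (preIter C V X0 γ k (fun m => g m.castSucc))
        (V (preIter C V X0 γ k (fun m => g m.castSucc))) (γ k) (g (Fin.last k)).1

/-- `E[h(X^k)]`, the average over all prefixes of unordered pairs of length `k`. -/
def Eavg (C : Fin ℓ → Finset (Fin p)) (V : Mat n p → Mat n p) (X0 : Mat n p)
    (γ : ℕ → ℝ) (k : ℕ) (h : Mat n p → ℝ) : ℝ :=
  (1 / (Fintype.card (PairT ℓ) : ℝ)) ^ k * ∑ g : Fin k → PairT ℓ, h (preIter C V X0 γ k g)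

lemma fip_eq (ξ η : Mat n p) : fip ξ η = ∑ j, ∑ i, ξ i j * η i j := by
  simp [fip, Matrix.trace, Matrix.mul_apply, Matrix.diag]

lemma fip_comm (ξ η : Mat n p) : fip ξ η = fip η ξ := by
  simp only [fip_eq]; congr 1; ext j; congr 1; ext i; ring

lemma fip_add_left (ξ η ρ : Mat n p) : fip (ξ + η) ρ = fip ξ ρ + fip η ρ := by
  simp [fip_eq, add_mul, Finset.sum_add_distrib]

lemma fip_add_right (ξ η ρ : Mat n p) : fip ρ (ξ + η) = fip ρ ξ + fip ρ η := by
  rw [fip_comm, fip_add_left, fip_comm ξ, fip_comm η]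

lemma fip_neg_left (ξ η : Mat n p) : fip (-ξ) η = -fip ξ η := by
  simp [fip_eq]

lemma fip_self_nonneg (ξ : Mat n p) : 0 ≤ fip ξ ξ := by
  rw [fip_eq]
  exact Finset.sum_nonneg fun j _ => Finset.sum_nonneg fun i _ => mul_self_nonneg _

lemma fnorm_sq (ξ : Mat n p) : fnorm ξ ^ 2 = fip ξ ξ := by
  rw [fnorm, Real.sq_sqrt (fip_self_nonneg ξ)]

lemma fnorm_nonneg (ξ : Mat n p) : 0 ≤ fnorm ξ := Real.sqrt_nonneg _

lemma fnorm_neg (ξ : Mat n p) : fnorm (-ξ) = fnorm ξ := by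
  unfold fnorm; rw [fip_neg_left, fip_comm, fip_neg_left, neg_neg]

/-- Lemma 4.1: Riemannian subgradient inequality on a proximally
smooth matrix manifold. -/
theorem riemannian_subgradient_inequality
    (n p : ℕ) (M : Set (Mat n p)) (hM : M.Nonempty) (R : ℝ) (hR : 0 < R)
    (T : Mat n p → Submodule ℝ (Mat n p))
    (hprox : ∀ X ∈ M, ∀ X' ∈ M, ∀ ζ : Mat n p,
      (∀ η ∈ T X, fip ζ η = 0) →
      2 * R * fip ζ (X' - X) ≤ fnorm ζ * (fnorm (X' - X)) ^ 2)
    (h : Mat n p → ℝ) (τ : ℝ) (X : Mat n p) (hXM : X ∈ M) (v : Mat n p)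
    (hsub : ∀ Y ∈ M, h Y ≥ h X + fip v (Y - X) - τ / 2 * (fnorm (Y - X)) ^ 2)
    (w : Mat n p) (hw : w ∈ T X) (hw' : ∀ η ∈ T X, fip (v - w) η = 0) :
    (∀ Y ∈ M,
      h Y ≥ h X + fip w (Y - X) - (τ + fnorm v / R) / 2 * (fnorm (Y - X)) ^ 2) ∧
    (∀ L : ℝ, fnorm v ≤ L → ∀ Y ∈ M,
      h Y ≥ h X + fip w (Y - X) - (τ + L / R) / 2 * (fnorm (Y - X)) ^ 2) := by
  set ζ := v - w with hζ
  have hζnorm : fnorm ζ ≤ fnorm v := by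
    have hpyth : fip v v = fip ζ ζ + fip w w := by
      have hzw : fip ζ w = 0 := hw' w hw
      have hv : v = ζ + w := by rw [hζ]; abel
      have hwz : fip w ζ = 0 := by rw [fip_comm]; exact hzw
      rw [hv, fip_add_left, fip_add_right, fip_add_right, hzw, hwz]
      ring
    unfold fnorm
    apply Real.sqrt_le_sqrt
    rw [hpyth]
    linarith [fip_self_nonneg w]
  have key : ∀ Y ∈ M, ∀ c : ℝ, fnorm v ≤ c →
      h Y ≥ h X + fip w (Y - X) - (τ + c / R) / 2 * (fnorm (Y - X)) ^ 2 := by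
    intro Y hY c hc
    have hprox' := hprox X hXM Y hY (-ζ) (fun η hη => by
      rw [fip_neg_left, hw' η hη, neg_zero])
    rw [fip_neg_left, fnorm_neg] at hprox'
    -- hprox' : 2 * R * -fip ζ (Y - X) ≤ fnorm ζ * fnorm (Y - X)^2
    have hsubY := hsub Y hY
    have hv : fip v (Y - X) = fip ζ (Y - X) + fip w (Y - X) := by
      have : v = ζ + w := by rw [hζ]; abel
      rw [this, fip_add_left]
    have hc2 : fnorm ζ ≤ c := le_trans hζnorm hc
    have hsq : (0:ℝ) ≤ fnorm (Y - X) ^ 2 := sq_nonneg _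
    have h1 : fip ζ (Y - X) ≥ -(c / (2 * R)) * fnorm (Y - X) ^ 2 := by
      rw [ge_iff_le, neg_mul, neg_le, ← mul_le_mul_iff_right₀ (show (0:ℝ) < 2 * R by linarith)]
      calc 2 * R * -fip ζ (Y - X) ≤ fnorm ζ * fnorm (Y - X) ^ 2 := hprox'
        _ ≤ c * fnorm (Y - X) ^ 2 := mul_le_mul_of_nonneg_right hc2 hsq
        _ = 2 * R * (c / (2 * R) * fnorm (Y - X) ^ 2) := by
            field_simp
    have : (τ + c / R) / 2 * fnorm (Y - X) ^ 2
        = τ / 2 * fnorm (Y - X) ^ 2 + c / (2 * R) * fnorm (Y - X) ^ 2 := by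
      field_simp
    rw [hv] at hsubY
    linarith
  exact ⟨fun Y hY => key Y hY (fnorm v) le_rfl, fun L hL Y hY => key Y hY L hL⟩

end RSSM
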